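/- Let T be an infinite rooted tree, ψ : T → ℂ, m ≠ n natural numbers, and suppose the multiplication operator M_ψ : L^(m) → L^(n) is bounded with operator norm ‖M_ψ‖. Then for every vertex v ≠ o, |ψ(v⁻)|·Λ_n(|v|)/Λ_m(|v|) ≤ ‖M_ψ‖; i.e., ν_{ψ,m,n} ≤ ‖M_ψ‖ < ∞. -/

import Mathlib

open Real Filter

/-- Iterated logarithm: ℓ₀(x) = x, ℓ_{j+1}(x) = 1 + log ℓ_j(x). -/
noncomputable def ell : ℕ → ℝ → ℝ
  | 0, x => x
  | j + 1, x => 1 + Real.log (ell j x)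

/-- Λ_k(x) = ∏_{j=0}^{k-1} ℓ_j(x). -/
noncomputable def Lam (k : ℕ) (x : ℝ) : ℝ := ∏ j ∈ Finset.range k, ell j x

/-- Discrete derivative of f on a rooted tree given by a parent map:
`f v - f (parent v)` (automatically 0 at the root since `parent o = o`). -/
def Der {V : Type*} (parent : V → V) (f : V → ℂ) (v : V) : ℂ := f v - f (parent v)

/-- The set of values |f'(v)|·Λ_k(|v|) over v ≠ o; f ∈ L^(k) iff this set is bounded above. -/
def lipSet {V : Type*} (o : V) (parent : V → V) (depth : V → ℕ) (k : ℕ) (f : V → ℂ) : Set ℝ :=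
  {r | ∃ v, v ≠ o ∧ r = ‖Der parent f v‖ * Lam k (depth v)}

/-- ‖f‖_k = |f(o)| + sup_{v ≠ o} |f'(v)|·Λ_k(|v|). -/
noncomputable def lipNorm {V : Type*} (o : V) (parent : V → V) (depth : V → ℕ) (k : ℕ)
    (f : V → ℂ) : ℝ :=
  ‖f o‖ + sSup (lipSet o parent depth k f)


/-!
Test the bound on `f = χ_u / Λ_m(|v|)` with `u = v⁻ ≠ o`. The derivative of `f` lives on `u` and
the children of `u`, where it has size `1 / Λ_m(|v|)` against weights at most `Λ_m(|v|)` (as `Λ_m`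
is monotone), so `‖f‖_m = 1` with the supremum attained at `v`; likewise
`‖ψ f‖_n = |ψ(u)| Λ_n(|v|) / Λ_m(|v|)`. When `u = o`, the constant function `1` gives
`|ψ(o)| ≤ C`, and `Λ_k(1) = 1`.
-/

lemma one_le_ell (j : ℕ) {x : ℝ} (hx : 1 ≤ x) : 1 ≤ ell j x := by
  induction j with
  | zero => exact hx
  | succ j ih => simpa [ell] using Real.log_nonneg ih

lemma ell_le_ell (j : ℕ) {x y : ℝ} (hx : 1 ≤ x) (hxy : x ≤ y) : ell j x ≤ ell j y := by
  induction j with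
  | zero => exact hxy
  | succ j ih =>
    have := Real.log_le_log (zero_lt_one.trans_le (one_le_ell j hx)) ih
    simp only [ell]
    linarith

lemma ell_one (j : ℕ) : ell j 1 = 1 := by
  induction j <;> simp [ell, *]

lemma one_le_Lam (k : ℕ) {x : ℝ} (hx : 1 ≤ x) : 1 ≤ Lam k x :=
  Finset.one_le_prod fun j _ => one_le_ell j hx

lemma Lam_le_Lam (k : ℕ) {x y : ℝ} (hx : 1 ≤ x) (hxy : x ≤ y) : Lam k x ≤ Lam k y :=
  Finset.prod_le_prod (fun j _ => zero_le_one.trans (one_le_ell j hx)) fun j _ => ell_le_ell j hx hxy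

lemma Lam_one (k : ℕ) : Lam k 1 = 1 := by
  simp [Lam, ell_one]

lemma Lam_natCast_nonneg (k d : ℕ) : 0 ≤ Lam k d := by
  rcases Nat.eq_zero_or_pos d with rfl | hd
  · cases k with
    | zero => simp [Lam]
    | succ k => simp [Lam, Finset.prod_range_succ', ell]
  · exact zero_le_one.trans (one_le_Lam k (by exact_mod_cast hd))

section RootedTree

variable {V : Type*} (o : V) (parent : V → V) (depth : V → ℕ) (k : ℕ)

lemma sSup_lipSet_nonneg (f : V → ℂ) : 0 ≤ sSup (lipSet o parent depth k f) :=
  Real.sSup_nonneg fun _ ⟨_, _, hr⟩ => hr ▸ mul_nonneg (norm_nonneg _) (Lam_natCast_nonneg k _)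

lemma norm_apply_root_le_lipNorm (f : V → ℂ) : ‖f o‖ ≤ lipNorm o parent depth k f :=
  le_add_of_nonneg_right (sSup_lipSet_nonneg o parent depth k f)

lemma lipSet_const_subset (a : ℂ) : lipSet o parent depth k (fun _ => a) ⊆ {0} := by
  rintro _ ⟨v, _, rfl⟩
  simp [Der]

lemma bddAbove_lipSet_const (a : ℂ) : BddAbove (lipSet o parent depth k (fun _ => a)) :=
  (bddAbove_singleton).mono (lipSet_const_subset o parent depth k a)

lemma lipNorm_const (a : ℂ) : lipNorm o parent depth k (fun _ => a) = ‖a‖ := by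
  have hsup : sSup (lipSet o parent depth k (fun _ => a)) = 0 :=
    le_antisymm (Real.sSup_le (fun r hr => (lipSet_const_subset o parent depth k a hr).le) le_rfl)
      (sSup_lipSet_nonneg o parent depth k _)
  rw [lipNorm, hsup, add_zero]

variable {o parent depth}
variable (hdepth : ∀ v, v ≠ o → depth v = depth (parent v) + 1)
include hdepth

lemma one_le_depth {v : V} (hv : v ≠ o) : (1 : ℝ) ≤ depth v := by
  rw [hdepth v hv]
  exact_mod_cast Nat.le_add_left 1 _

lemma parent_ne_self {v : V} (hv : v ≠ o) : parent v ≠ v := by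
  intro h
  have := hdepth v hv
  rw [h] at this
  omega

lemma norm_Der_single_mul_Lam_le [DecidableEq V] {u : V} (hu : u ≠ o) (a : ℂ) {w : V}
    (hw : w ≠ o) :
    ‖Der parent (Pi.single u a) w‖ * Lam k (depth w) ≤ ‖a‖ * Lam k (depth u + 1 : ℕ) := by
  by_cases hwu : w = u
  · subst hwu
    rw [Der, Pi.single_eq_same, Pi.single_eq_of_ne (parent_ne_self hdepth hw), sub_zero]
    gcongr
    exact Lam_le_Lam k (one_le_depth hdepth hw) (by push_cast; linarith)
  by_cases hpw : parent w = u
  · rw [Der, Pi.single_eq_of_ne hwu, hpw, Pi.single_eq_same, zero_sub, norm_neg, hdepth w hw, hpw]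
  · rw [Der, Pi.single_eq_of_ne hwu, Pi.single_eq_of_ne hpw, sub_zero, norm_zero, zero_mul]
    exact mul_nonneg (norm_nonneg a) (Lam_natCast_nonneg k _)

lemma isGreatest_lipSet_single [DecidableEq V] {v : V} (hv : v ≠ o) (hu : parent v ≠ o) (a : ℂ) :
    IsGreatest (lipSet o parent depth k (Pi.single (parent v) a)) (‖a‖ * Lam k (depth v)) := by
  refine ⟨⟨v, hv, ?_⟩, ?_⟩
  · rw [Der, Pi.single_eq_of_ne (parent_ne_self hdepth hv).symm, Pi.single_eq_same, zero_sub,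
      norm_neg]
  · rintro _ ⟨w, hw, rfl⟩
    rw [hdepth v hv]
    exact norm_Der_single_mul_Lam_le k hdepth hu a hw

lemma lipNorm_single [DecidableEq V] {v : V} (hv : v ≠ o) (hu : parent v ≠ o) (a : ℂ) :
    lipNorm o parent depth k (Pi.single (parent v) a) = ‖a‖ * Lam k (depth v) := by
  rw [lipNorm, (isGreatest_lipSet_single k hdepth hv hu a).csSup_eq,
    Pi.single_eq_of_ne (Ne.symm hu), norm_zero, zero_add]

end RootedTree

theorem nu_le_opnorm_general {V : Type*} (o : V) (parent : V → V) (depth : V → ℕ)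
    (hdepth0 : depth o = 0)
    (hdepth : ∀ v, v ≠ o → depth v = depth (parent v) + 1)
    (ψ : V → ℂ) (m n : ℕ) (C : ℝ)
    (hbdd : ∀ f : V → ℂ, BddAbove (lipSet o parent depth m f) →
      BddAbove (lipSet o parent depth n (fun v => ψ v * f v)) ∧
      lipNorm o parent depth n (fun v => ψ v * f v) ≤ C * lipNorm o parent depth m f) :
    ∀ v, v ≠ o → ‖ψ (parent v)‖ * Lam n (depth v) / Lam m (depth v) ≤ C := by
  classical
  intro v hv
  by_cases hu : parent v = o
  · have hbound := (hbdd _ (bddAbove_lipSet_const o parent depth m 1)).2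
    rw [lipNorm_const, norm_one, mul_one] at hbound
    have hψ := (norm_apply_root_le_lipNorm o parent depth n _).trans hbound
    rw [hdepth v hv, hu, hdepth0, zero_add, Nat.cast_one, Lam_one, Lam_one, div_one, mul_one]
    simpa using hψ
  · have hΛ : 0 < Lam m (depth v) :=
      zero_lt_one.trans_le (one_le_Lam m (one_le_depth hdepth hv))
    set c : ℝ := (Lam m (depth v))⁻¹
    have hbound := (hbdd (Pi.single (parent v) (c : ℂ))
      (isGreatest_lipSet_single m hdepth hv hu _).bddAbove).2
    simp only [← Pi.single_mul_right_apply] at hbound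
    rw [lipNorm_single n hdepth hv hu, lipNorm_single m hdepth hv hu, norm_mul,
      Complex.norm_real, Real.norm_of_nonneg (inv_nonneg.2 hΛ.le), inv_mul_cancel₀ hΛ.ne',
      mul_one] at hbound
    simpa [div_eq_mul_inv, c, mul_right_comm] using hbound

/-- If M_ψ : L^(m) → L^(n) is bounded with ‖M_ψ f‖_n ≤ C‖f‖_m, then
|ψ(v⁻)|·Λ_n(|v|)/Λ_m(|v|) ≤ C for every v ≠ o, i.e. ν_{ψ,m,n} ≤ ‖M_ψ‖. -/
theorem nu_le_opnorm {V : Type*} (o : V) (parent : V → V) (depth : V → ℕ)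
    (hpar : parent o = o) (hdepth0 : depth o = 0)
    (hdepth : ∀ v, v ≠ o → depth v = depth (parent v) + 1)
    (hchild : ∀ v, ∃ w, w ≠ o ∧ parent w = v)
    (ψ : V → ℂ) (m n : ℕ) (hmn : m ≠ n) (C : ℝ)
    (hbdd : ∀ f : V → ℂ, BddAbove (lipSet o parent depth m f) →
      BddAbove (lipSet o parent depth n (fun v => ψ v * f v)) ∧
      lipNorm o parent depth n (fun v => ψ v * f v) ≤ C * lipNorm o parent depth m f) :
    ∀ v, v ≠ o → ‖ψ (parent v)‖ * Lam n (depth v) / Lam m (depth v) ≤ C :=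
  nu_le_opnorm_general o parent depth hdepth0 hdepth ψ m n C hbdd
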